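/- Let V be a finite set of N nodes partitioned into two sensitive groups S₀ and S₁ of sizes N₀ ≥ 1 and N₁ ≥ 1, with features X : V → ℝ^d and the fairness-aware message passing F⁽⁰⁾ = X, F⁽¹⁾, F⁽²⁾. Let μ⁽⁰⁾ and μ⁽¹⁾ be the group means of X and let Δ ∈ ℝ^d be the componentwise maximal deviation of X from its overall mean. Then the representation discrepancy Δ_DP^Rep(F⁽²⁾) = ‖(1/N₀)·Σ_{i∈S₀} F⁽²⁾_i − (1/N₁)·Σ_{j∈S₁} F⁽²⁾_j‖ satisfies Δ_DP^Rep(F⁽²⁾) ≤ (3 − (1/(N₀N₁²) + 1/(N₀²N₁))·Σ_{i∈S₀} Σ_{j∈S₁} k(F⁽¹⁾_i, F⁽¹⁾_j))·C₃ + C₂, where C₂ = ‖μ⁽⁰⁾ − μ⁽¹⁾‖ + 8·(1 + 1/N₀ + 1/N₁)²·‖Δ‖ + 2·‖Δ‖ and C₃ = (3 − 1/N₀ − 1/N₁)·‖μ⁽⁰⁾ − μ⁽¹⁾‖ + (4 + 2/N₀ + 2/N₁)·‖Δ‖. -/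

import Mathlib

open Matrix Finset

/-- RBF kernel `k(x,y) = exp(-α‖x-y‖²)`. -/
noncomputable def ker {d : ℕ} (α : ℝ) (x y : EuclideanSpace ℝ (Fin d)) : ℝ :=
  Real.exp (-α * ‖x - y‖ ^ 2)

/-- The sensitive group `S_b`, where group membership is given by `grp`
(`false` encodes `S₀` and `true` encodes `S₁`). -/
def sgrp {V : Type*} [Fintype V] (grp : V → Bool) (b : Bool) : Finset V :=
  Finset.univ.filter (fun i => grp i = b)

/-- Fairness-aware message passing: `F 0 = X`, and each layer `k ≥ 1` updates node `i`
(lying in group `grp i`, with opposite group `!grp i`) by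
`F⁽ᵏ⁾_i = X_i + (1/|N(i)|)·Σ_{u∈N(i)} F⁽ᵏ⁻¹⁾_u
       − (1/N_t²)·Σ_{u∈S_t} k(F⁽ᵏ⁻¹⁾_u,F⁽ᵏ⁻¹⁾_i)·F⁽ᵏ⁻¹⁾_u
       + (1/(N₀N₁))·Σ_{u∈S_{1−t}} k(F⁽ᵏ⁻¹⁾_u,F⁽ᵏ⁻¹⁾_i)·F⁽ᵏ⁻¹⁾_u
       + ((1/N_t²)·Σ_{u∈S_t} k(...) − (1/(N₀N₁))·Σ_{u∈S_{1−t}} k(...))·F⁽ᵏ⁻¹⁾_i`. -/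
def FairMP {V : Type*} [Fintype V] {d : ℕ} (α : ℝ) (grp : V → Bool)
    (Nb : V → Finset V) (X : V → EuclideanSpace ℝ (Fin d))
    (F : ℕ → V → EuclideanSpace ℝ (Fin d)) : Prop :=
  F 0 = X ∧
  ∀ k : ℕ, 1 ≤ k → ∀ i : V,
    F k i = X i + (((Nb i).card : ℝ)⁻¹) • ∑ u ∈ Nb i, F (k-1) u
      - (1 / ((sgrp grp (grp i)).card : ℝ) ^ 2) •
          ∑ u ∈ sgrp grp (grp i), ker α (F (k-1) u) (F (k-1) i) • F (k-1) u
      + (1 / (((sgrp grp false).card : ℝ) * ((sgrp grp true).card : ℝ))) •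
          ∑ u ∈ sgrp grp (!grp i), ker α (F (k-1) u) (F (k-1) i) • F (k-1) u
      + ((1 / ((sgrp grp (grp i)).card : ℝ) ^ 2) *
            ∑ u ∈ sgrp grp (grp i), ker α (F (k-1) u) (F (k-1) i)
         - (1 / (((sgrp grp false).card : ℝ) * ((sgrp grp true).card : ℝ))) *
            ∑ u ∈ sgrp grp (!grp i), ker α (F (k-1) u) (F (k-1) i)) • F (k-1) i

/-- Componentwise maximal deviation of the rows of `F` from the overall mean row:
`(dev F)_m = max_{i∈V} |F_{i,m} − (1/N)·Σ_{j∈V} F_{j,m}|`. -/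
noncomputable def dev {V : Type*} [Fintype V] {d : ℕ}
    (F : V → EuclideanSpace ℝ (Fin d)) : EuclideanSpace ℝ (Fin d) :=
  WithLp.toLp 2 (fun m => ⨆ i : V, |F i m - (1 / (Fintype.card V : ℝ)) * ∑ j : V, F j m|)

/-!
Subtract the overall mean `x̄` of `X`. One layer of message passing writes
`F⁽ᵏ⁺¹⁾_i − (x̄ + c)` as `X_i − x̄`, plus the neighbour average of `F⁽ᵏ⁾_u − c`, plus
kernel-weighted differences `F⁽ᵏ⁾_u − F⁽ᵏ⁾_i` over the own group (weight `1/N_t²`) and over the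
other group (weight `1/(N₀N₁)`), with kernel values in `(0, 1]`. So if every `F⁽ᵏ⁾_u` lies
componentwise within `B·Δ` of `c`, every `F⁽ᵏ⁺¹⁾_i` lies within `(1 + B + 4B/N_t)·Δ` of
`x̄ + c`. Two layers give `|F⁽²⁾_i − 3x̄| ≤ (7 + 24/N_t)·Δ`, hence the group means of `F⁽²⁾` differ
by at most `(14 + 24/N₀ + 24/N₁)·‖Δ‖`. Since the kernel sum is at most `N₀N₁`, this is below
the stated bound.
-/

lemma abs_mul_sum_mul_le {ι : Type*} {s : Finset ι} {c b : ℝ} {w g : ι → ℝ} (hc : 0 ≤ c)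
    (hw : ∀ u ∈ s, |w u| ≤ 1) (hg : ∀ u ∈ s, |g u| ≤ b) :
    |c * ∑ u ∈ s, w u * g u| ≤ c * #s * b := by
  rw [abs_mul, abs_of_nonneg hc, mul_assoc]
  refine mul_le_mul_of_nonneg_left ((Finset.abs_sum_le_sum_abs _ _).trans ?_) hc
  have := Finset.sum_le_card_nsmul s (fun u => |w u * g u|) b fun u hu => by
    rw [abs_mul]
    exact (mul_le_of_le_one_left (abs_nonneg _) (hw u hu)).trans (hg u hu)
  simpa using this

lemma abs_inv_card_mul_sum_le {ι : Type*} {s : Finset ι} {g : ι → ℝ} {b : ℝ}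
    (hg : ∀ u ∈ s, |g u| ≤ b) (hb : 0 ≤ b) :
    |(#s : ℝ)⁻¹ * ∑ u ∈ s, g u| ≤ b := by
  have := abs_mul_sum_mul_le (c := (#s : ℝ)⁻¹) (w := fun _ => 1) (by positivity) (by simp) hg
  simp only [one_mul] at this
  exact this.trans (mul_le_of_le_one_left hb inv_mul_le_one)

lemma inv_card_smul_sum_sub {ι E : Type*} [AddCommGroup E] [Module ℝ E] {s : Finset ι}
    (hs : s.Nonempty) (f : ι → E) (c : E) :
    (#s : ℝ)⁻¹ • ∑ u ∈ s, (f u - c) = (#s : ℝ)⁻¹ • ∑ u ∈ s, f u - c := by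
  have : (#s : ℝ) ≠ 0 := by exact_mod_cast hs.card_pos.ne'
  rw [Finset.sum_sub_distrib, Finset.sum_const, smul_sub, ← Nat.cast_smul_eq_nsmul ℝ,
    smul_smul, inv_mul_cancel₀ this, one_smul]

lemma abs_inv_card_smul_sum_sub_apply_le {ι n : Type*} {s : Finset ι} (hs : s.Nonempty)
    {f : ι → EuclideanSpace ℝ n} {y : EuclideanSpace ℝ n} {b : n → ℝ}
    (h : ∀ i ∈ s, ∀ m, |f i m - y m| ≤ b m) (m : n) :
    |((#s : ℝ)⁻¹ • ∑ i ∈ s, f i - y) m| ≤ b m := by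
  rw [← inv_card_smul_sum_sub hs]
  simp only [PiLp.smul_apply, smul_eq_mul, WithLp.ofLp_sum, Finset.sum_apply, PiLp.sub_apply]
  obtain ⟨i, hi⟩ := hs
  exact abs_inv_card_mul_sum_le (fun u hu => h u hu m) ((abs_nonneg _).trans (h i hi m))

lemma EuclideanSpace.norm_le_norm_of_abs_apply_le {n : Type*} [Fintype n]
    {v w : EuclideanSpace ℝ n} (h : ∀ m, |v m| ≤ w m) : ‖v‖ ≤ ‖w‖ := by
  rw [EuclideanSpace.norm_eq, EuclideanSpace.norm_eq]
  gcongr with m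
  simpa only [Real.norm_eq_abs] using (h m).trans (le_abs_self _)

lemma norm_inv_card_smul_sum_sub_inv_card_smul_sum_le {ι n : Type*} [Fintype n] {s t : Finset ι}
    (hs : s.Nonempty) (ht : t.Nonempty) {f : ι → EuclideanSpace ℝ n}
    {y D : EuclideanSpace ℝ n} {a b : ℝ} (hab : 0 ≤ a + b)
    (hfs : ∀ i ∈ s, ∀ m, |f i m - y m| ≤ a * D m) (hft : ∀ i ∈ t, ∀ m, |f i m - y m| ≤ b * D m) :
    ‖(#s : ℝ)⁻¹ • ∑ i ∈ s, f i - (#t : ℝ)⁻¹ • ∑ i ∈ t, f i‖ ≤ (a + b) * ‖D‖ := by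
  rw [← sub_sub_sub_cancel_right _ _ y, ← Real.norm_of_nonneg hab, ← norm_smul]
  refine EuclideanSpace.norm_le_norm_of_abs_apply_le fun m => ?_
  rw [PiLp.sub_apply, PiLp.smul_apply, smul_eq_mul, add_mul]
  exact (abs_sub _ _).trans (add_le_add (abs_inv_card_smul_sum_sub_apply_le hs hfs m)
    (abs_inv_card_smul_sum_sub_apply_le ht hft m))

lemma ker_pos {d : ℕ} (α : ℝ) (x y : EuclideanSpace ℝ (Fin d)) : 0 < ker α x y :=
  Real.exp_pos _

lemma ker_le_one {d : ℕ} {α : ℝ} (hα : 0 ≤ α) (x y : EuclideanSpace ℝ (Fin d)) :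
    ker α x y ≤ 1 :=
  Real.exp_le_one_iff.mpr (by nlinarith [sq_nonneg ‖x - y‖])

lemma sum_sum_ker_le_card_mul_card {ι κ : Type*} {d : ℕ} {α : ℝ} (hα : 0 ≤ α)
    (s : Finset ι) (t : Finset κ) (f : ι → EuclideanSpace ℝ (Fin d))
    (g : κ → EuclideanSpace ℝ (Fin d)) :
    ∑ i ∈ s, ∑ j ∈ t, ker α (f i) (g j) ≤ (#s : ℝ) * #t := by
  simpa using Finset.sum_le_sum fun i (_ : i ∈ s) =>
    Finset.sum_le_card_nsmul t _ _ fun j _ => ker_le_one hα (f i) (g j)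

lemma card_sgrp_mul_card_sgrp_not {V : Type*} [Fintype V] (grp : V → Bool) (b : Bool) :
    (#(sgrp grp false) : ℝ) * #(sgrp grp true) = #(sgrp grp b) * #(sgrp grp (!b)) := by
  cases b <;> simp [mul_comm]

lemma one_le_card_sgrp_self {V : Type*} [Fintype V] (grp : V → Bool) (i : V) :
    1 ≤ (#(sgrp grp (grp i)) : ℝ) :=
  Nat.one_le_cast.mpr (Finset.card_pos.mpr ⟨i, by simp [sgrp]⟩)

lemma abs_sub_mean_le_dev {V : Type*} [Fintype V] {d : ℕ} (X : V → EuclideanSpace ℝ (Fin d))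
    (i : V) (m : Fin d) : |X i m - ((Fintype.card V : ℝ)⁻¹ • ∑ j, X j) m| ≤ dev X m := by
  simp only [PiLp.smul_apply, smul_eq_mul, WithLp.ofLp_sum, Finset.sum_apply, ← one_div]
  exact le_ciSup (f := fun i => |X i m - 1 / (Fintype.card V : ℝ) * ∑ j, X j m|)
    (Set.finite_range _).bddAbove i

namespace FairMP

variable {V : Type*} [Fintype V] {d : ℕ} {α : ℝ} {grp : V → Bool} {Nb : V → Finset V}
  {X : V → EuclideanSpace ℝ (Fin d)} {F : ℕ → V → EuclideanSpace ℝ (Fin d)}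

lemma succ_sub_eq (hF : FairMP α grp Nb X F) (k : ℕ) {i : V} (hi : (Nb i).Nonempty)
    (x₀ c : EuclideanSpace ℝ (Fin d)) :
    F (k + 1) i - (x₀ + c) = (X i - x₀) + (#(Nb i) : ℝ)⁻¹ • ∑ u ∈ Nb i, (F k u - c)
      + (1 / (#(sgrp grp (grp i)) : ℝ) ^ 2) •
          ∑ u ∈ sgrp grp (grp i), ker α (F k u) (F k i) • (F k i - F k u)
      + (1 / ((#(sgrp grp false) : ℝ) * #(sgrp grp true))) •
          ∑ u ∈ sgrp grp (!grp i), ker α (F k u) (F k i) • (F k u - F k i) := by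
  rw [hF.2 (k + 1) le_add_self i, Nat.add_sub_cancel, inv_card_smul_sum_sub hi]
  simp only [smul_sub, Finset.sum_sub_distrib, ← Finset.sum_smul, sub_smul, mul_smul]
  abel

lemma abs_succ_sub_le (hF : FairMP α grp Nb X F) (hα : 0 ≤ α) {k : ℕ} {i : V}
    (hi : (Nb i).Nonempty) {x₀ c : EuclideanSpace ℝ (Fin d)} {D : Fin d → ℝ} {B : ℝ}
    (hB : 0 ≤ B) (hX : ∀ j m, |X j m - x₀ m| ≤ D m) (hFk : ∀ u m, |F k u m - c m| ≤ B * D m)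
    (m : Fin d) :
    |F (k + 1) i m - (x₀ + c) m| ≤ (1 + B + 4 * B / #(sgrp grp (grp i))) * D m := by
  have hsplit := congrArg (· m) (hF.succ_sub_eq k hi x₀ c)
  simp only [PiLp.sub_apply, PiLp.add_apply, PiLp.smul_apply, smul_eq_mul, WithLp.ofLp_sum,
    Finset.sum_apply] at hsplit
  set n : ℝ := (#(sgrp grp (grp i)) : ℝ)
  have hn : 0 < n := zero_lt_one.trans_le (one_le_card_sgrp_self grp i)
  have hD : 0 ≤ D m := (abs_nonneg _).trans (hX i m)
  have hker : ∀ u, |ker α (F k u) (F k i)| ≤ 1 := fun u => by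
    rw [abs_of_pos (ker_pos ..)]; exact ker_le_one hα ..
  have hdiff : ∀ u v, |F k u m - F k v m| ≤ 2 * B * D m := fun u v => by
    have := abs_sub_le (F k u m) (c m) (F k v m)
    rw [abs_sub_comm (c m)] at this
    linarith [hFk u m, hFk v m]
  have hneigh : |(#(Nb i) : ℝ)⁻¹ * ∑ u ∈ Nb i, (F k u m - c m)| ≤ B * D m :=
    abs_inv_card_mul_sum_le (fun u _ => hFk u m) (mul_nonneg hB hD)
  have hown : |1 / n ^ 2 * ∑ u ∈ sgrp grp (grp i), ker α (F k u) (F k i) * (F k i m - F k u m)|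
      ≤ 2 * B * D m / n := by
    calc _ ≤ 1 / n ^ 2 * n * (2 * B * D m) :=
          abs_mul_sum_mul_le (by positivity) (fun u _ => hker u) (fun u _ => hdiff i u)
      _ = 2 * B * D m / n := by field_simp
  have hcross : |1 / ((#(sgrp grp false) : ℝ) * #(sgrp grp true)) *
      ∑ u ∈ sgrp grp (!grp i), ker α (F k u) (F k i) * (F k u m - F k i m)|
      ≤ 2 * B * D m / n := by
    rw [card_sgrp_mul_card_sgrp_not grp (grp i)]
    set n' : ℝ := (#(sgrp grp (!grp i)) : ℝ)
    calc _ ≤ 1 / (n * n') * n' * (2 * B * D m) :=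
          abs_mul_sum_mul_le (by positivity) (fun u _ => hker u) (fun u _ => hdiff u i)
      _ = n' / n' * (2 * B * D m / n) := by ring
      _ ≤ 2 * B * D m / n := mul_le_of_le_one_left (by positivity) (div_self_le_one n')
  rw [PiLp.add_apply, hsplit]
  calc _ ≤ D m + B * D m + 2 * B * D m / n + 2 * B * D m / n := by
        refine (abs_add_le _ _).trans (add_le_add ((abs_add_le _ _).trans
          (add_le_add ((abs_add_le _ _).trans (add_le_add (hX i m) ?_)) ?_)) ?_)
        exacts [hneigh, hown, hcross]
    _ = (1 + B + 4 * B / n) * D m := by ring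

lemma abs_two_sub_le (hF : FairMP α grp Nb X F) (hα : 0 ≤ α) (hNb : ∀ i, (Nb i).Nonempty)
    {x₀ : EuclideanSpace ℝ (Fin d)} {D : Fin d → ℝ} (hX : ∀ j m, |X j m - x₀ m| ≤ D m)
    (i : V) (m : Fin d) :
    |F 2 i m - (x₀ + (x₀ + x₀)) m| ≤ (7 + 24 / #(sgrp grp (grp i))) * D m := by
  have hF1 : ∀ u m, |F 1 u m - (x₀ + x₀) m| ≤ 6 * D m := fun u m => by
    refine (hF.abs_succ_sub_le (k := 0) hα (hNb u) zero_le_one hX (by simpa [hF.1] using hX)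
      m).trans (mul_le_mul_of_nonneg_right ?_ ((abs_nonneg _).trans (hX u m)))
    linarith [div_le_self zero_le_four (one_le_card_sgrp_self grp u)]
  exact (hF.abs_succ_sub_le (k := 1) hα (hNb i) (by norm_num) hX hF1 m).trans_eq (by ring)

end FairMP

lemma discrepancy_bound_arith {a b κ M D : ℝ} (ha : 0 ≤ a) (hb : 0 ≤ b) (hab : a + b ≤ 2)
    (hκ : κ ≤ a + b) (hM : 0 ≤ M) (hD : 0 ≤ D) :
    (14 + 24 * a + 24 * b) * D ≤
      (3 - κ) * ((3 - a - b) * M + (4 + 2 * a + 2 * b) * D)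
        + (M + 8 * (1 + a + b) ^ 2 * D + 2 * D) := by
  have hC : 0 ≤ (3 - a - b) * M + (4 + 2 * a + 2 * b) * D := by
    have : 0 ≤ 3 - a - b := by linarith
    positivity
  nlinarith [mul_le_mul_of_nonneg_right (show 3 - (a + b) ≤ 3 - κ by linarith) hC,
    mul_nonneg (sq_nonneg (3 - a - b)) hM, mul_nonneg (sq_nonneg (a + b - 1 / 2)) hD]

theorem stmt1_general {V : Type*} [Fintype V] {d : ℕ} {α : ℝ} (hα : 0 < α)
    (grp : V → Bool) (N₀ N₁ : ℕ)
    (hcard0 : (sgrp grp false).card = N₀) (hcard1 : (sgrp grp true).card = N₁)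
    (hN₀ : 1 ≤ N₀) (hN₁ : 1 ≤ N₁)
    (Nb : V → Finset V) (hNb : ∀ i, (Nb i).Nonempty)
    (X : V → EuclideanSpace ℝ (Fin d)) (F : ℕ → V → EuclideanSpace ℝ (Fin d))
    (hF : FairMP α grp Nb X F)
    (μ : Bool → EuclideanSpace ℝ (Fin d)) :
    ‖(1 / (N₀ : ℝ)) • ∑ i ∈ sgrp grp false, F 2 i
        - (1 / (N₁ : ℝ)) • ∑ j ∈ sgrp grp true, F 2 j‖ ≤
      (3 - (1 / ((N₀ : ℝ) * (N₁ : ℝ) ^ 2) + 1 / ((N₀ : ℝ) ^ 2 * (N₁ : ℝ))) *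
          ∑ i ∈ sgrp grp false, ∑ j ∈ sgrp grp true, ker α (F 1 i) (F 1 j)) *
        ((3 - 1 / (N₀ : ℝ) - 1 / (N₁ : ℝ)) * ‖μ false - μ true‖
          + (4 + 2 / (N₀ : ℝ) + 2 / (N₁ : ℝ)) * ‖dev X‖)
      + (‖μ false - μ true‖ + 8 * (1 + 1 / (N₀ : ℝ) + 1 / (N₁ : ℝ)) ^ 2 * ‖dev X‖
          + 2 * ‖dev X‖) := by
  set x₀ := (Fintype.card V : ℝ)⁻¹ • ∑ j, X j
  have hF2 : ∀ b, ∀ i ∈ sgrp grp b, ∀ m,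
      |F 2 i m - (x₀ + (x₀ + x₀)) m| ≤ (7 + 24 / (#(sgrp grp b) : ℝ)) * dev X m := by
    rintro b i hi m
    obtain rfl : grp i = b := (Finset.mem_filter.mp hi).2
    exact hF.abs_two_sub_le hα.le hNb (abs_sub_mean_le_dev X) i m
  have hS : ∀ b, (sgrp grp b).Nonempty := fun b => Finset.card_pos.mp (by cases b <;> omega)
  have hmean := norm_inv_card_smul_sum_sub_inv_card_smul_sum_le (hS false) (hS true)
    (by positivity) (hF2 false) (hF2 true)
  rw [hcard0, hcard1, ← one_div, ← one_div] at hmean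
  have h0 : (1 : ℝ) ≤ N₀ := by exact_mod_cast hN₀
  have h1 : (1 : ℝ) ≤ N₁ := by exact_mod_cast hN₁
  have hκ : (1 / ((N₀ : ℝ) * (N₁ : ℝ) ^ 2) + 1 / ((N₀ : ℝ) ^ 2 * (N₁ : ℝ))) *
      ∑ i ∈ sgrp grp false, ∑ j ∈ sgrp grp true, ker α (F 1 i) (F 1 j) ≤ 1 / N₀ + 1 / N₁ := by
    refine (mul_le_mul_of_nonneg_left (sum_sum_ker_le_card_mul_card hα.le _ _ (F 1) (F 1))
      (by positivity)).trans_eq ?_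
    rw [hcard0, hcard1]
    field_simp
    ring
  calc _ ≤ _ := hmean
    _ = (14 + 24 * (1 / (N₀ : ℝ)) + 24 * (1 / (N₁ : ℝ))) * ‖dev X‖ := by ring
    _ ≤ _ := by
      simpa only [mul_one_div] using discrepancy_bound_arith (by positivity) (by positivity)
        (by linarith [div_le_self zero_le_one h0, div_le_self zero_le_one h1]) hκ
        (norm_nonneg (μ false - μ true)) (norm_nonneg (dev X))

/-- Theorem 4.2 (`K = 2`): the representation discrepancy of `F⁽²⁾` between the two
sensitive groups satisfies
`Δ_DP^Rep(F⁽²⁾) ≤ (3 − (1/(N₀N₁²) + 1/(N₀²N₁))·Σ_{i∈S₀}Σ_{j∈S₁} k(F⁽¹⁾_i, F⁽¹⁾_j))·C₃ + C₂`,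
where `C₂ = ‖μ⁽⁰⁾ − μ⁽¹⁾‖ + 8·(1 + 1/N₀ + 1/N₁)²·‖Δ‖ + 2·‖Δ‖` and
`C₃ = (3 − 1/N₀ − 1/N₁)·‖μ⁽⁰⁾ − μ⁽¹⁾‖ + (4 + 2/N₀ + 2/N₁)·‖Δ‖`. -/
theorem stmt1 {V : Type*} [Fintype V] {d : ℕ} {α : ℝ} (hα : 0 < α)
    (grp : V → Bool) (N₀ N₁ : ℕ)
    (hcard0 : (sgrp grp false).card = N₀) (hcard1 : (sgrp grp true).card = N₁)
    (hN₀ : 1 ≤ N₀) (hN₁ : 1 ≤ N₁)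
    (Nb : V → Finset V) (hNb : ∀ i, (Nb i).Nonempty)
    (X : V → EuclideanSpace ℝ (Fin d)) (F : ℕ → V → EuclideanSpace ℝ (Fin d))
    (hF : FairMP α grp Nb X F)
    (μ : Bool → EuclideanSpace ℝ (Fin d))
    (hμ : ∀ b, μ b = (((sgrp grp b).card : ℝ))⁻¹ • ∑ i ∈ sgrp grp b, X i) :
    ‖(1 / (N₀ : ℝ)) • ∑ i ∈ sgrp grp false, F 2 i
        - (1 / (N₁ : ℝ)) • ∑ j ∈ sgrp grp true, F 2 j‖ ≤
      (3 - (1 / ((N₀ : ℝ) * (N₁ : ℝ) ^ 2) + 1 / ((N₀ : ℝ) ^ 2 * (N₁ : ℝ))) *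
          ∑ i ∈ sgrp grp false, ∑ j ∈ sgrp grp true, ker α (F 1 i) (F 1 j)) *
        ((3 - 1 / (N₀ : ℝ) - 1 / (N₁ : ℝ)) * ‖μ false - μ true‖
          + (4 + 2 / (N₀ : ℝ) + 2 / (N₁ : ℝ)) * ‖dev X‖)
      + (‖μ false - μ true‖ + 8 * (1 + 1 / (N₀ : ℝ) + 1 / (N₁ : ℝ)) ^ 2 * ‖dev X‖
          + 2 * ‖dev X‖) :=
  stmt1_general hα grp N₀ N₁ hcard0 hcard1 hN₀ hN₁ Nb hNb X F hF μ
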